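/- arXiv:1910.13870 — 3 statements merged into one kernel-verified Lean document; each statement's English description precedes it below -/
import Mathlib

section
/- Let u : Ω → ℝ be convex and bounded, and assume that Ω* := ∂u(Ω) is a bounded subset of ℝ^d. Then closure(Ω*) ⊆ χ_u(Ω̄) ⊆ χ_u(ℝ^d) ⊆ convexHull(closure(Ω*)). -/
/-!
Every subgradient `q ∈ ∂u(y)`, `y ∈ Ω`, gives an affine minorant of `ũ`. A limit `p` of subgradients
`q_k ∈ ∂u(y_k)` is therefore a subgradient of `ũ` at a cluster point `x ∈ Ω̄` of the `y_k`, because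
`ũ(x)` is at most the corresponding limit of `u(y_k)`, while `u(y_k) + q_k·(z - y_k) ≤ ũ(z)`.
Conversely, if `p ∈ χ_u(x)` and `q·v ≤ c` on `Ω*`, then along the ray `x + t v` the function `ũ`
grows at most like `C + t c` (as `u` and `Ω` are bounded), but at least like `ũ(x) + t p·v`, so
`p·v ≤ c`. Since `Ω*` is bounded, the convex hull of its closure is compact (Carathéodory), and
strict separation puts every `p ∈ χ_u(ℝ^d)` into it.
-/

open Set MeasureTheory Filter Topology

noncomputable section

abbrev Euc (d : ℕ) := EuclideanSpace ℝ (Fin d)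

/-- Subdifferential of `v` at `x` relative to the set `C`. -/
def subdiff {d : ℕ} (C : Set (Euc d)) (v : Euc d → ℝ) (x : Euc d) : Set (Euc d) :=
  {p | ∀ y ∈ C, v x + (inner ℝ p (y - x) : ℝ) ≤ v y}

/-- `⋃ x ∈ S, subdiff C v x`. -/
def subdiffSet {d : ℕ} (C : Set (Euc d)) (v : Euc d → ℝ) (S : Set (Euc d)) : Set (Euc d) :=
  ⋃ x ∈ S, subdiff C v x

/-- The convex extension `ũ` of `u : Ω → ℝ` (may take the value `+∞`, hence `EReal`). -/
def extFun {d : ℕ} (Ω : Set (Euc d)) (u : Euc d → ℝ) (x : Euc d) : EReal :=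
  ⨆ y ∈ Ω, ⨆ q ∈ subdiff Ω u y, ((u y + (inner ℝ q (x - y) : ℝ) : ℝ) : EReal)

/-- `χ_u(x)`: the subdifferential of the extension `ũ` at `x`. -/
def chiSub {d : ℕ} (Ω : Set (Euc d)) (u : Euc d → ℝ) (x : Euc d) : Set (Euc d) :=
  {p | ∀ z : Euc d, extFun Ω u x + (((inner ℝ p (z - x) : ℝ) : ℝ) : EReal) ≤ extFun Ω u z}

def chiSubSet {d : ℕ} (Ω : Set (Euc d)) (u : Euc d → ℝ) (S : Set (Euc d)) : Set (Euc d) :=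
  ⋃ x ∈ S, chiSub Ω u x

/-- The lattice `hℤ^d`. -/
def latt (d : ℕ) (h : ℝ) : Set (Euc d) := {x | ∀ i, ∃ m : ℤ, x i = m * h}

/-- `Ω_h = Ω ∩ hℤ^d`. -/
def meshΩ {d : ℕ} (Ω : Set (Euc d)) (h : ℝ) : Set (Euc d) := Ω ∩ latt d h

/-- An integer direction `e ∈ ℤ^d` as a vector of `ℝ^d`. -/
def intVec {d : ℕ} (e : Fin d → ℤ) : Euc d :=
  (EuclideanSpace.equiv (Fin d) ℝ).symm (fun i => (e i : ℝ))

/-- `h^e_x = sup { r h : r ∈ [0,1], x + r h e ∈ closure Ω }`. -/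
def hev {d : ℕ} (Ω : Set (Euc d)) (h : ℝ) (x : Euc d) (e : Fin d → ℤ) : ℝ :=
  sSup {t | ∃ r ∈ Icc (0:ℝ) 1, t = r * h ∧ x + (r * h) • intVec e ∈ closure Ω}

/-- The boundary nodes `∂Ω_h` for the direction set `V`. -/
def meshBd {d : ℕ} (Ω : Set (Euc d)) (h : ℝ) (V : Set (Fin d → ℤ)) : Set (Euc d) :=
  {x ∈ frontier Ω | ∃ y ∈ meshΩ Ω h, ∃ e ∈ V, x = y + hev Ω h y e • intVec e}

/-- The convex envelope of `u` with constraints on `N`: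
`Γ(u)(x) = sup {L x : L affine, L ≤ u on N}`. -/
def convEnv {d : ℕ} (N : Set (Euc d)) (u : Euc d → ℝ) (x : Euc d) : ℝ :=
  sSup {t | ∃ (p : Euc d) (c : ℝ),
    (∀ y ∈ N, (inner ℝ p y : ℝ) + c ≤ u y) ∧ t = (inner ℝ p x : ℝ) + c}

/-- The second difference operator `Δ_e u_h (x)`. -/
def deltaE {d : ℕ} (Ω : Set (Euc d)) (h : ℝ) (u : Euc d → ℝ) (e : Fin d → ℤ)
    (x : Euc d) : ℝ :=
  2 / (hev Ω h x e + hev Ω h x (-e)) *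
    ((u (x + hev Ω h x e • intVec e) - u x) / hev Ω h x e +
     (u (x + hev Ω h x (-e) • intVec (-e)) - u x) / hev Ω h x (-e))

/-- Discrete convexity with the full set of directions `e ∈ ℤ^d \ {0}`. -/
def DiscConvex {d : ℕ} (Ω : Set (Euc d)) (h : ℝ) (u : Euc d → ℝ) : Prop :=
  ∀ x ∈ meshΩ Ω h, ∀ e : Fin d → ℤ, e ≠ 0 → 0 ≤ deltaE Ω h u e x

theorem convexHull_range_eq_image_stdSimplex {E ι : Type*} [AddCommGroup E] [Module ℝ E]
    [Fintype ι] (z : ι → E) :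
    convexHull ℝ (range z) = (fun w : ι → ℝ => ∑ i, w i • z i) '' stdSimplex ℝ ι := by
  classical
  have hL : (fun w : ι → ℝ => ∑ i, w i • z i) = Fintype.linearCombination ℝ z :=
    funext fun w => (Fintype.linearCombination_apply ℝ z w).symm
  rw [hL, ← convexHull_rangle_single_eq_stdSimplex, LinearMap.image_convexHull, ← range_comp]
  congr 2
  ext i
  simp [Fintype.linearCombination_apply_single]

theorem IsCompact.convexHull_of_finiteDimensional {E : Type*} [NormedAddCommGroup E]
    [NormedSpace ℝ E] [FiniteDimensional ℝ E] {s : Set E} (hs : IsCompact s) :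
    IsCompact (convexHull ℝ s) := by
  set n := Module.finrank ℝ E
  let Φ : (Fin (n + 1) → ℝ) × (Fin (n + 1) → E) → E := fun wz => ∑ i, wz.1 i • wz.2 i
  suffices convexHull ℝ s = Φ '' (stdSimplex ℝ (Fin (n + 1)) ×ˢ univ.pi fun _ => s) by
    rw [this]
    exact ((isCompact_stdSimplex ℝ _).prod (isCompact_univ_pi fun _ => hs)).image
      (by fun_prop)
  refine Subset.antisymm ?_ ?_
  · rw [convexHull_eq_union]
    simp only [iUnion_subset_iff]
    intro t hts hti x hx
    have hne : Nonempty t := by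
      obtain ⟨a, ha⟩ := convexHull_nonempty_iff.1 ⟨x, hx⟩
      exact ⟨⟨a, ha⟩⟩
    have hcard : Fintype.card t ≤ Fintype.card (Fin (n + 1)) := by
      have := Submodule.finrank_le (vectorSpan ℝ (range ((↑) : t → E)))
      have := hti.card_le_finrank_succ
      simp only [Fintype.card_fin]
      omega
    obtain ⟨g, hg⟩ : ∃ g : Fin (n + 1) → t, Function.Surjective g :=
      Function.exists_surjective_iff.2
        ⟨⟨fun _ => Classical.arbitrary t⟩, Function.Embedding.nonempty_of_card_le hcard⟩
    have hrange : range (fun i => (g i : E)) = t := by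
      change range (Subtype.val ∘ g) = _
      rw [range_comp, hg.range_eq, image_univ, Subtype.range_coe]
    rw [← hrange, convexHull_range_eq_image_stdSimplex] at hx
    obtain ⟨w, hw, rfl⟩ := hx
    exact ⟨(w, fun i => g i), ⟨hw, fun i _ => hts (g i).2⟩, rfl⟩
  · rintro _ ⟨⟨w, z⟩, ⟨hw, hz⟩, rfl⟩
    refine convexHull_mono (range_subset_iff.2 fun i => hz i (mem_univ i)) ?_
    rw [convexHull_range_eq_image_stdSimplex]
    exact ⟨w, hw, rfl⟩

theorem ConvexOn.exists_mem_subdiff {d : ℕ} {Ω : Set (Euc d)} {u : Euc d → ℝ}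
    (hu : ConvexOn ℝ Ω u) (hΩ : IsOpen Ω) {x₀ : Euc d} (hx₀ : x₀ ∈ Ω) :
    ∃ q, q ∈ subdiff Ω u x₀ := by
  set S : Set (Euc d × ℝ) := {p | p.1 ∈ Ω ∧ u p.1 < p.2}
  have hS : IsOpen S := by
    have hcont : ContinuousOn (fun p : Euc d × ℝ => p.2 - u p.1) (Ω ×ˢ univ) :=
      continuousOn_snd.sub ((hu.continuousOn hΩ).comp continuousOn_fst fun p hp => hp.1)
    convert hcont.isOpen_inter_preimage (hΩ.prod isOpen_univ) (isOpen_Ioi (a := 0)) using 1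
    ext p
    simp [S, sub_pos]
  -- `f (y, t) = g y + t c` with `c < 0`, and the slope `g / (-c)` is the subgradient
  obtain ⟨f, hf⟩ := geometric_hahn_banach_open_point hu.convex_strict_epigraph hS
    (fun h => lt_irrefl _ h.2 : (x₀, u x₀) ∉ S)
  set g : Euc d →L[ℝ] ℝ := f.comp (.inl ℝ (Euc d) ℝ)
  set c := f (0, 1)
  have hf_apply (y : Euc d) (t : ℝ) : f (y, t) = g y + t * c := by
    rw [show (y, t) = ((y, 0) : Euc d × ℝ) + t • (0, 1) by simp, map_add, map_smul,
      smul_eq_mul]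
    rfl
  have hc : c < 0 := by
    have := hf (x₀, u x₀ + 1) ⟨hx₀, by simp⟩
    rw [hf_apply, hf_apply] at this
    linarith
  have hsupport (y : Euc d) (hy : y ∈ Ω) : g y - g x₀ ≤ -c * (u y - u x₀) := by
    refine le_of_forall_pos_lt_add fun ε hε => ?_
    have := hf (y, u y + ε / -c) ⟨hy, lt_add_of_pos_right _ (div_pos hε (neg_pos.2 hc))⟩
    rw [hf_apply, hf_apply, add_mul, div_mul_eq_mul_div, div_neg, mul_div_assoc,
      div_self hc.ne] at this
    linarith
  refine ⟨(InnerProductSpace.toDual ℝ (Euc d)).symm ((-c)⁻¹ • g), fun y hy => ?_⟩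
  rw [InnerProductSpace.toDual_symm_apply, smul_apply, map_sub, smul_eq_mul,
    ← sub_nonneg]
  have := mul_le_mul_of_nonneg_left (hsupport y hy) (inv_nonneg.2 (neg_nonneg.2 hc.le))
  rw [← mul_assoc, inv_mul_cancel₀ (neg_ne_zero.2 hc.ne), one_mul] at this
  linarith

section Extension

variable {d : ℕ} {Ω : Set (Euc d)} {u : Euc d → ℝ}

theorem le_extFun {y q : Euc d} (hy : y ∈ Ω) (hq : q ∈ subdiff Ω u y) (x : Euc d) :
    ((u y + inner ℝ q (x - y) : ℝ) : EReal) ≤ extFun Ω u x :=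
  le_iSup₂_of_le y hy (le_iSup₂_of_le q hq le_rfl)

theorem extFun_le {x : Euc d} {c : EReal}
    (h : ∀ y ∈ Ω, ∀ q ∈ subdiff Ω u y, ((u y + inner ℝ q (x - y) : ℝ) : EReal) ≤ c) :
    extFun Ω u x ≤ c :=
  iSup₂_le fun y hy => iSup₂_le fun q hq => h y hy q hq

theorem extFun_le_of_tendsto {y : ℕ → Euc d} {x : Euc d} {L : ℝ} (hyΩ : ∀ k, y k ∈ Ω)
    (hy : Tendsto y atTop (𝓝 x)) (hL : Tendsto (fun k => u (y k)) atTop (𝓝 L)) :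
    extFun Ω u x ≤ L :=
  extFun_le fun _ _ _ hq => EReal.coe_le_coe_iff.2 <|
    le_of_tendsto_of_tendsto' (tendsto_const_nhds.add (tendsto_const_nhds.inner
      (hy.sub tendsto_const_nhds))) hL fun k => hq (y k) (hyΩ k)

theorem mem_chiSub_of_tendsto {y q : ℕ → Euc d} {x p : Euc d} {L : ℝ} (hyΩ : ∀ k, y k ∈ Ω)
    (hq : ∀ k, q k ∈ subdiff Ω u (y k)) (hy : Tendsto y atTop (𝓝 x))
    (hqp : Tendsto q atTop (𝓝 p)) (hL : Tendsto (fun k => u (y k)) atTop (𝓝 L)) :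
    p ∈ chiSub Ω u x := by
  intro z
  have hlim : Tendsto (fun k => u (y k) + inner ℝ (q k) (z - y k)) atTop
      (𝓝 (L + inner ℝ p (z - x))) :=
    hL.add (hqp.inner (tendsto_const_nhds.sub hy))
  calc extFun Ω u x + ((inner ℝ p (z - x) : ℝ) : EReal)
      ≤ (L : EReal) + ((inner ℝ p (z - x) : ℝ) : EReal) :=
        add_le_add_left (extFun_le_of_tendsto hyΩ hy hL) _
    _ ≤ extFun Ω u z := by
        rw [← EReal.coe_add]
        exact le_of_tendsto' (EReal.tendsto_coe.2 hlim) fun k => le_extFun (hyΩ k) (hq k) z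

theorem closure_subdiffSet_subset_chiSubSet_closure (hΩ : Bornology.IsBounded Ω) {M : ℝ}
    (hM : ∀ x ∈ Ω, |u x| ≤ M) :
    closure (subdiffSet Ω u Ω) ⊆ chiSubSet Ω u (closure Ω) := by
  intro p hp
  obtain ⟨q, hqΩ, hqp⟩ := mem_closure_iff_seq_limit.1 hp
  simp only [subdiffSet, mem_iUnion, exists_prop] at hqΩ
  choose y hyΩ hq using hqΩ
  have hK : IsCompact (closure Ω ×ˢ Icc (-M) M) :=
    hΩ.isCompact_closure.prod isCompact_Icc
  obtain ⟨⟨x, L⟩, ⟨hx, -⟩, φ, hφ, hlim⟩ := hK.tendsto_subseq (x := fun k => (y k, u (y k)))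
    fun k => ⟨subset_closure (hyΩ k), abs_le.1 (hM _ (hyΩ k))⟩
  exact mem_biUnion hx <| mem_chiSub_of_tendsto (fun k => hyΩ (φ k)) (fun k => hq (φ k))
    hlim.fst_nhds (hqp.comp hφ.tendsto_atTop) hlim.snd_nhds

theorem exists_coe_le_extFun (hne : Ω.Nonempty) (hΩ : IsOpen Ω) (hu : ConvexOn ℝ Ω u)
    (x : Euc d) : ∃ r : ℝ, (r : EReal) ≤ extFun Ω u x := by
  obtain ⟨y, hy⟩ := hne
  obtain ⟨q, hq⟩ := hu.exists_mem_subdiff hΩ hy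
  exact ⟨_, le_extFun hy hq x⟩

theorem extFun_add_smul_le {M R B c : ℝ} {v : Euc d} (hM : ∀ y ∈ Ω, u y ≤ M)
    (hR : ∀ y ∈ Ω, ‖y‖ ≤ R) (hB : ∀ q ∈ subdiffSet Ω u Ω, ‖q‖ ≤ B)
    (hc : ∀ q ∈ subdiffSet Ω u Ω, inner ℝ q v ≤ c) (x : Euc d) {t : ℝ} (ht : 0 ≤ t) :
    extFun Ω u (x + t • v) ≤ ((M + B * (‖x‖ + R) + t * c : ℝ) : EReal) := by
  refine extFun_le fun y hy q hq => EReal.coe_le_coe_iff.2 ?_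
  have hqΩ : q ∈ subdiffSet Ω u Ω := mem_biUnion hy hq
  have hxy : inner ℝ q (x - y) ≤ B * (‖x‖ + R) :=
    calc inner ℝ q (x - y) ≤ ‖q‖ * ‖x - y‖ := real_inner_le_norm q (x - y)
      _ ≤ B * (‖x‖ + R) :=
        mul_le_mul (hB q hqΩ) ((norm_sub_le x y).trans (by linarith [hR y hy]))
          (norm_nonneg _) ((norm_nonneg q).trans (hB q hqΩ))
  rw [add_sub_right_comm, inner_add_right, real_inner_smul_right]
  nlinarith [hM y hy, hc q hqΩ]

theorem inner_le_of_mem_chiSub (hne : Ω.Nonempty) (hΩ : Bornology.IsBounded Ω)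
    (hΩo : IsOpen Ω) (hu : ConvexOn ℝ Ω u) {M : ℝ} (hM : ∀ y ∈ Ω, u y ≤ M)
    (hsb : Bornology.IsBounded (subdiffSet Ω u Ω)) {x p v : Euc d} {c : ℝ}
    (hp : p ∈ chiSub Ω u x) (hc : ∀ q ∈ subdiffSet Ω u Ω, inner ℝ q v ≤ c) :
    inner ℝ p v ≤ c := by
  obtain ⟨r, hr⟩ := exists_coe_le_extFun hne hΩo hu x
  obtain ⟨R, hR⟩ := hΩ.exists_norm_le
  obtain ⟨B, hB⟩ := hsb.exists_norm_le
  set C := M + B * (‖x‖ + R)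
  have hray (t : ℝ) (ht : 0 ≤ t) : r + t * inner ℝ p v ≤ C + t * c := by
    have := (add_le_add_left hr _).trans <| (hp (x + t • v)).trans
      (extFun_add_smul_le hM hR hB hc x ht)
    rwa [add_sub_cancel_left, real_inner_smul_right, ← EReal.coe_add,
      EReal.coe_le_coe_iff] at this
  by_contra! hlt
  set t := (|C - r| + 1) / (inner ℝ p v - c)
  have ht : t * (inner ℝ p v - c) = |C - r| + 1 := div_mul_cancel₀ _ (sub_pos.2 hlt).ne'
  linarith [hray t (by positivity), mul_sub t (inner ℝ p v) c, le_abs_self (C - r)]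

theorem chiSubSet_univ_subset_convexHull (hne : Ω.Nonempty) (hΩ : Bornology.IsBounded Ω)
    (hΩo : IsOpen Ω) (hu : ConvexOn ℝ Ω u) {M : ℝ} (hM : ∀ y ∈ Ω, u y ≤ M)
    (hsb : Bornology.IsBounded (subdiffSet Ω u Ω)) :
    chiSubSet Ω u univ ⊆ convexHull ℝ (closure (subdiffSet Ω u Ω)) := by
  intro p hp
  obtain ⟨x, -, hp⟩ := mem_iUnion₂.1 hp
  by_contra hK
  obtain ⟨f, c, hfc, hcp⟩ := geometric_hahn_banach_closed_point (convex_convexHull ℝ _)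
    hsb.isCompact_closure.convexHull_of_finiteDimensional.isClosed hK
  set v := (InnerProductSpace.toDual ℝ (Euc d)).symm f
  have hv (w : Euc d) : inner ℝ w v = f w := by
    rw [real_inner_comm, InnerProductSpace.toDual_symm_apply]
  have hc : ∀ q ∈ subdiffSet Ω u Ω, inner ℝ q v ≤ c := fun q hq => by
    rw [hv]
    exact (hfc q (subset_convexHull ℝ _ (subset_closure hq))).le
  have := inner_le_of_mem_chiSub hne hΩ hΩo hu hM hsb hp hc
  rw [hv] at this
  linarith

end Extension

theorem statement1_general {d : ℕ} (Ω : Set (Euc d))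
    (hne : Ω.Nonempty) (hbd : Bornology.IsBounded Ω) (hop : IsOpen Ω)
    (u : Euc d → ℝ) (hu : ConvexOn ℝ Ω u)
    (hub : ∃ M : ℝ, ∀ x ∈ Ω, |u x| ≤ M)
    (hsb : Bornology.IsBounded (subdiffSet Ω u Ω)) :
    closure (subdiffSet Ω u Ω) ⊆ chiSubSet Ω u (closure Ω) ∧
    chiSubSet Ω u (closure Ω) ⊆ chiSubSet Ω u Set.univ ∧
    chiSubSet Ω u Set.univ ⊆ convexHull ℝ (closure (subdiffSet Ω u Ω)) := by
  obtain ⟨M, hM⟩ := hub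
  refine ⟨closure_subdiffSet_subset_chiSubSet_closure hbd hM,
    biUnion_subset_biUnion_left (subset_univ _),
    chiSubSet_univ_subset_convexHull hne hbd hop hu (fun y hy => (abs_le.1 (hM y hy)).2) hsb⟩

/-- if `u` is convex and bounded on `Ω` and `Ω* = ∂u(Ω)` is bounded, then
`closure Ω* ⊆ χ_u(closure Ω) ⊆ χ_u(ℝ^d) ⊆ convexHull ℝ (closure Ω*)`. -/
theorem statement1 {d : ℕ} (hd : 1 ≤ d) (Ω : Set (Euc d))
    (hne : Ω.Nonempty) (hbd : Bornology.IsBounded Ω) (hop : IsOpen Ω) (hcv : Convex ℝ Ω)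
    (u : Euc d → ℝ) (hu : ConvexOn ℝ Ω u)
    (hub : ∃ M : ℝ, ∀ x ∈ Ω, |u x| ≤ M)
    (hsb : Bornology.IsBounded (subdiffSet Ω u Ω)) :
    closure (subdiffSet Ω u Ω) ⊆ chiSubSet Ω u (closure Ω) ∧
    chiSubSet Ω u (closure Ω) ⊆ chiSubSet Ω u Set.univ ∧
    chiSubSet Ω u Set.univ ⊆ convexHull ℝ (closure (subdiffSet Ω u Ω)) :=
  statement1_general Ω hne hbd hop u hu hub hsb

end
end

section
/- Let u_h be a mesh function, let x ∈ conv(N_h), and let p ∈ ∂Γ(u_h)(x). Then there exists y ∈ N_h such that u_h(y) = Γ(u_h)(y) and p ∈ ∂Γ(u_h)(x) ∩ ∂Γ(u_h)(y). -/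
open Set MeasureTheory Filter Topology

noncomputable section

/-! The node set is finite, because a bounded set meets the lattice `hℤ^d` in finitely many
points. So for any slope `p` some node `y` minimises `u y - ⟪p, y⟫`; the affine function of slope
`p` through `(y, u y)` is then an admissible minorant, hence lies below `Γ` on the convex hull,
and it touches both `Γ` and `u` at `y`. -/

lemma tendsto_latticePoint_cofinite_cocompact {d : ℕ} {h : ℝ} (hh : h ≠ 0) :
    Tendsto (fun m : Fin d → ℤ => WithLp.toLp 2 fun i => (m i : ℝ) * h)
      cofinite (cocompact (Euc d)) := by
  have hpi : Tendsto (fun m : Fin d → ℤ => fun i => (m i : ℝ) * h) cofinite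
      (cocompact (Fin d → ℝ)) := by
    rw [← coprodᵢ_cofinite, ← coprodᵢ_cocompact]
    exact Tendsto.pi_map_coprodᵢ (m := fun _ (n : ℤ) => (n : ℝ) * h) fun _ => by
      convert Int.tendsto_zmultiplesHom_cofinite hh using 1
      ext n
      simp [zsmul_eq_mul]
  exact (EuclideanSpace.equiv (Fin d) ℝ).symm.toHomeomorph.isClosedEmbedding.tendsto_cocompact.comp
    hpi

lemma Bornology.IsBounded.finite_inter_latt {d : ℕ} {h : ℝ} (hh : h ≠ 0) {S : Set (Euc d)}
    (hS : Bornology.IsBounded S) : (S ∩ latt d h).Finite := by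
  set φ := fun m : Fin d → ℤ => WithLp.toLp 2 fun i => (m i : ℝ) * h
  have hfin : (φ ⁻¹' closure S).Finite :=
    tendsto_cofinite_cocompact_iff.mp (tendsto_latticePoint_cofinite_cocompact hh) _
      hS.isCompact_closure
  refine (hfin.image φ).subset ?_
  rintro x ⟨hxS, hxl⟩
  choose m hm using hxl
  have hx : φ m = x := by ext i; simp [φ, hm]
  exact ⟨m, by simpa [hx] using subset_closure hxS, hx⟩

section ConvexEnvelope

variable {d : ℕ} {N : Set (Euc d)} {u : Euc d → ℝ}

lemma convEnv_le (hu : BddBelow (u '' N)) {y : Euc d} (hy : y ∈ N) : convEnv N u y ≤ u y := by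
  obtain ⟨c, hc⟩ := hu
  refine csSup_le ⟨inner ℝ (0 : Euc d) y + c, 0, c, fun z hz => ?_, rfl⟩ ?_
  · simpa using hc (mem_image_of_mem u hz)
  · rintro _ ⟨q, c, hqc, rfl⟩
    exact hqc y hy

lemma le_convEnv (hu : BddAbove (u '' N)) {q : Euc d} {c : ℝ}
    (hqc : ∀ y ∈ N, inner ℝ q y + c ≤ u y) {z : Euc d} (hz : z ∈ convexHull ℝ N) :
    inner ℝ q z + c ≤ convEnv N u z := by
  obtain ⟨M, hM⟩ := hu
  refine le_csSup ⟨M, ?_⟩ ⟨q, c, hqc, rfl⟩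
  rintro _ ⟨q', c', hqc', rfl⟩
  have hhalf : convexHull ℝ N ⊆ {w | inner ℝ q' w ≤ M - c'} := by
    refine convexHull_min (fun y hy => ?_) (convex_halfSpace_le (innerSL ℝ q').isLinear _)
    show inner ℝ q' y ≤ M - c'
    linarith [hqc' y hy, hM (mem_image_of_mem u hy)]
  linarith [show inner ℝ q' z ≤ M - c' from hhalf hz]

theorem exists_eq_convEnv_and_mem_subdiff (hN : N.Finite) (hNne : N.Nonempty) (p : Euc d) :
    ∃ y ∈ N, u y = convEnv N u y ∧ p ∈ subdiff (convexHull ℝ N) (convEnv N u) y := by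
  obtain ⟨y, hyN, hymin⟩ := Set.exists_min_image N (fun y => u y - inner ℝ p y) hN hNne
  have hsupport : ∀ z ∈ convexHull ℝ N, inner ℝ p z + (u y - inner ℝ p y) ≤ convEnv N u z :=
    fun z => le_convEnv (hN.image u).bddAbove fun w hw => by linarith [hymin w hw]
  have htouch : u y = convEnv N u y :=
    le_antisymm (by simpa using hsupport y (subset_convexHull ℝ N hyN))
      (convEnv_le (hN.image u).bddBelow hyN)
  refine ⟨y, hyN, htouch, fun z hz => ?_⟩
  rw [← htouch, inner_sub_right]
  linarith [hsupport z hz]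

end ConvexEnvelope

theorem statement4_general {d : ℕ} (Ω : Set (Euc d))
    (hbd : Bornology.IsBounded Ω)
    (h : ℝ) (hh : 0 < h)
    (B : Set (Euc d)) (hBfin : B.Finite)
    (u : Euc d → ℝ)
    (x : Euc d) (hx : x ∈ convexHull ℝ (meshΩ Ω h ∪ B))
    (p : Euc d)
    (hp : p ∈ subdiff (convexHull ℝ (meshΩ Ω h ∪ B))
        (convEnv (meshΩ Ω h ∪ B) u) x) :
    ∃ y ∈ meshΩ Ω h ∪ B,
      u y = convEnv (meshΩ Ω h ∪ B) u y ∧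
      p ∈ subdiff (convexHull ℝ (meshΩ Ω h ∪ B)) (convEnv (meshΩ Ω h ∪ B) u) x ∩
          subdiff (convexHull ℝ (meshΩ Ω h ∪ B)) (convEnv (meshΩ Ω h ∪ B) u) y := by
  have hN : (meshΩ Ω h ∪ B).Finite := (hbd.finite_inter_latt hh.ne').union hBfin
  obtain ⟨y, hyN, hyu, hyp⟩ :=
    exists_eq_convEnv_and_mem_subdiff hN (convexHull_nonempty_iff.mp ⟨x, hx⟩) (u := u) p
  exact ⟨y, hyN, hyu, hp, hyp⟩

/-- for a mesh function `u_h`, `x ∈ conv(N_h)` and `p ∈ ∂Γ(u_h)(x)`, there is a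
node `y ∈ N_h` with `u_h(y) = Γ(u_h)(y)` and `p ∈ ∂Γ(u_h)(x) ∩ ∂Γ(u_h)(y)`. -/
theorem statement4 {d : ℕ} (hd : 1 ≤ d) (Ω : Set (Euc d))
    (hne : Ω.Nonempty) (hbd : Bornology.IsBounded Ω) (hop : IsOpen Ω) (hcv : Convex ℝ Ω)
    (h : ℝ) (hh : 0 < h)
    (B : Set (Euc d)) (hBfin : B.Finite) (hBbd : B ⊆ frontier Ω)
    (u : Euc d → ℝ)
    (x : Euc d) (hx : x ∈ convexHull ℝ (meshΩ Ω h ∪ B))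
    (p : Euc d)
    (hp : p ∈ subdiff (convexHull ℝ (meshΩ Ω h ∪ B))
        (convEnv (meshΩ Ω h ∪ B) u) x) :
    ∃ y ∈ meshΩ Ω h ∪ B,
      u y = convEnv (meshΩ Ω h ∪ B) u y ∧
      p ∈ subdiff (convexHull ℝ (meshΩ Ω h ∪ B)) (convEnv (meshΩ Ω h ∪ B) u) x ∩
          subdiff (convexHull ℝ (meshΩ Ω h ∪ B)) (convEnv (meshΩ Ω h ∪ B) u) y :=
  statement4_general Ω hbd h hh B hBfin u x hx p hp

end
end

section
/- Let u_h be a mesh function and let x ∈ Ω_h satisfy Γ(u_h)(x) ≠ u_h(x). Then ∂_h u_h(x) = ∅, and for every p ∈ ∂Γ(u_h)(x) there exists y ∈ N_h with y ≠ x such that u_h(y) = Γ(u_h)(y) and p ∈ ∂Γ(u_h)(x) ∩ ∂Γ(u_h)(y). -/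
open Set MeasureTheory Filter Topology

noncomputable section

/-!
The node set `N` is finite: `Ω` is bounded and `hℤ^d` is a discrete lattice. The envelope `Γ` is the
supremum of the affine minorants of `u` on `N`, so a discrete subgradient of `u` at `x` is an affine
minorant touching `u` at `x`, which forces `Γ x = u x`. For `p ∈ ∂Γ(x)` the affine function
`L = Γ x + ⟪p, · - x⟫` is again a minorant of `u` on `N`; raising it by its least gap to `u` over the
finite set `N` still gives a minorant, whose value at `x` is at most `Γ x`, so that gap is zero and
`L` touches `u` at some node `y`. There `Γ y = u y = L y`, hence `y ≠ x`, and `p ∈ ∂Γ(y)` because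
`Γ` and `L` agree at `y`.
-/

theorem latt_eq_span {d : ℕ} {h : ℝ} (hh : h ≠ 0) :
    latt d h = Submodule.span ℤ (Set.range
      ((EuclideanSpace.basisFun (Fin d) ℝ).toBasis.isUnitSMul fun _ => hh.isUnit)) := by
  ext x
  rw [SetLike.mem_coe, Module.Basis.mem_span_iff_repr_mem]
  refine forall_congr' fun i => exists_congr fun m => ?_
  simp only [Module.Basis.repr_isUnitSMul, OrthonormalBasis.coe_toBasis_repr_apply,
    EuclideanSpace.basisFun_repr, Units.smul_def, Units.val_inv_eq_inv_val, IsUnit.unit_spec,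
    smul_eq_mul, algebraMap_int_eq, eq_intCast]
  rw [eq_inv_mul_iff_mul_eq₀ hh, mul_comm, eq_comm]

theorem meshΩ_finite {d : ℕ} {Ω : Set (Euc d)} (hΩ : Bornology.IsBounded Ω) {h : ℝ} (hh : h ≠ 0) :
    (meshΩ Ω h).Finite := by
  rw [meshΩ, latt_eq_span hh]
  exact ZSpan.setFinite_inter _ hΩ

section ConvexEnvelope

open scoped RealInnerProductSpace

variable {d : ℕ} {N : Set (Euc d)} {u : Euc d → ℝ}

theorem mem_subdiff_of_eq_add_inner {C : Set (Euc d)} {v : Euc d → ℝ} {x y p : Euc d}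
    (hp : p ∈ subdiff C v x) (hy : v y = v x + ⟪p, y - x⟫) : p ∈ subdiff C v y := by
  intro z hz
  have : ⟪p, z - y⟫ = ⟪p, z - x⟫ - ⟪p, y - x⟫ := by
    rw [← inner_sub_right, sub_sub_sub_cancel_right]
  rw [hy, this]
  linarith [hp z hz]

theorem convEnv_le_of_mem (hu : BddBelow (u '' N)) {z : Euc d} (hz : z ∈ N) :
    convEnv N u z ≤ u z := by
  obtain ⟨b, hb⟩ := hu
  refine csSup_le ⟨b, 0, b, fun y hy => ?_, by simp⟩ ?_
  · simpa using hb ⟨y, hy, rfl⟩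
  · rintro _ ⟨p, c, hpc, rfl⟩
    exact hpc z hz

theorem le_convEnv_of_forall_le {a : ℝ} {p x₀ z : Euc d}
    (hL : ∀ y ∈ N, a + ⟪p, y - x₀⟫ ≤ u y) (hz : z ∈ N) :
    a + ⟪p, z - x₀⟫ ≤ convEnv N u z := by
  have slope_form : ∀ y, a + ⟪p, y - x₀⟫ = ⟪p, y⟫ + (a - ⟪p, x₀⟫) := fun y => by
    rw [inner_sub_right]; ring
  refine le_csSup ⟨u z, ?_⟩ ⟨p, a - ⟪p, x₀⟫, fun y hy => ?_, slope_form z⟩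
  · rintro _ ⟨q, c, hqc, rfl⟩
    exact hqc z hz
  · simpa only [slope_form] using hL y hy

theorem convEnv_eq_of_mem_subdiff (hu : BddBelow (u '' N)) {x p : Euc d} (hx : x ∈ N)
    (hp : p ∈ subdiff N u x) : convEnv N u x = u x :=
  le_antisymm (convEnv_le_of_mem hu hx) <| by
    simpa using le_convEnv_of_forall_le (z := x) hp hx

theorem exists_mem_eq_convEnv_add_inner (hN : N.Finite) {x p : Euc d} (hx : x ∈ N)
    (hL : ∀ y ∈ N, convEnv N u x + ⟪p, y - x⟫ ≤ u y) :
    ∃ y ∈ N, u y = convEnv N u x + ⟪p, y - x⟫ := by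
  set gap : Euc d → ℝ := fun y => u y - (convEnv N u x + ⟪p, y - x⟫)
  obtain ⟨a, haN, ha⟩ := Set.exists_min_image N gap hN ⟨x, hx⟩
  have lifted : convEnv N u x + gap a + ⟪p, x - x⟫ ≤ convEnv N u x :=
    le_convEnv_of_forall_le (fun y hy => by linarith [ha y hy]) hx
  refine ⟨a, haN, le_antisymm ?_ (hL a haN)⟩
  simp only [sub_self, inner_zero_right, add_zero] at lifted
  linarith

end ConvexEnvelope

theorem statement6_general {d : ℕ} (Ω : Set (Euc d))
    (hbd : Bornology.IsBounded Ω)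
    (h : ℝ) (hh : 0 < h)
    (B : Set (Euc d)) (hBfin : B.Finite)
    (u : Euc d → ℝ)
    (x : Euc d) (hx : x ∈ meshΩ Ω h)
    (hne' : convEnv (meshΩ Ω h ∪ B) u x ≠ u x) :
    subdiff (meshΩ Ω h ∪ B) u x = ∅ ∧
    ∀ p ∈ subdiff (convexHull ℝ (meshΩ Ω h ∪ B)) (convEnv (meshΩ Ω h ∪ B) u) x,
      ∃ y ∈ meshΩ Ω h ∪ B, y ≠ x ∧
        u y = convEnv (meshΩ Ω h ∪ B) u y ∧
        p ∈ subdiff (convexHull ℝ (meshΩ Ω h ∪ B)) (convEnv (meshΩ Ω h ∪ B) u) x ∩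
            subdiff (convexHull ℝ (meshΩ Ω h ∪ B)) (convEnv (meshΩ Ω h ∪ B) u) y := by
  set N := meshΩ Ω h ∪ B
  have hN : N.Finite := (meshΩ_finite hbd hh.ne').union hBfin
  have hu : BddBelow (u '' N) := (hN.image u).bddBelow
  have hxN : x ∈ N := Or.inl hx
  refine ⟨eq_empty_of_forall_notMem fun p hp => hne' (convEnv_eq_of_mem_subdiff hu hxN hp),
    fun p hp => ?_⟩
  have minorant : ∀ y ∈ N, convEnv N u x + inner ℝ p (y - x) ≤ u y := fun y hy =>
    (hp y (subset_convexHull ℝ N hy)).trans (convEnv_le_of_mem hu hy)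
  obtain ⟨y, hyN, hy⟩ := exists_mem_eq_convEnv_add_inner hN hxN minorant
  have hΓy : convEnv N u y = u y :=
    le_antisymm (convEnv_le_of_mem hu hyN) (hy ▸ le_convEnv_of_forall_le minorant hyN)
  refine ⟨y, hyN, ?_, hΓy.symm, hp, mem_subdiff_of_eq_add_inner hp (hΓy.trans hy)⟩
  rintro rfl
  simp only [sub_self, inner_zero_right, add_zero] at hy
  exact hne' hy.symm

/-- if `x ∈ Ω_h` and `Γ(u_h)(x) ≠ u_h(x)`, then `∂_h u_h(x) = ∅` and each
`p ∈ ∂Γ(u_h)(x)` also lies in `∂Γ(u_h)(y)` for some node `y ≠ x` with `u_h(y) = Γ(u_h)(y)`. -/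
theorem statement6 {d : ℕ} (hd : 1 ≤ d) (Ω : Set (Euc d))
    (hne : Ω.Nonempty) (hbd : Bornology.IsBounded Ω) (hop : IsOpen Ω) (hcv : Convex ℝ Ω)
    (h : ℝ) (hh : 0 < h)
    (B : Set (Euc d)) (hBfin : B.Finite) (hBbd : B ⊆ frontier Ω)
    (u : Euc d → ℝ)
    (x : Euc d) (hx : x ∈ meshΩ Ω h)
    (hne' : convEnv (meshΩ Ω h ∪ B) u x ≠ u x) :
    subdiff (meshΩ Ω h ∪ B) u x = ∅ ∧
    ∀ p ∈ subdiff (convexHull ℝ (meshΩ Ω h ∪ B)) (convEnv (meshΩ Ω h ∪ B) u) x,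
      ∃ y ∈ meshΩ Ω h ∪ B, y ≠ x ∧
        u y = convEnv (meshΩ Ω h ∪ B) u y ∧
        p ∈ subdiff (convexHull ℝ (meshΩ Ω h ∪ B)) (convEnv (meshΩ Ω h ∪ B) u) x ∩
            subdiff (convexHull ℝ (meshΩ Ω h ∪ B)) (convEnv (meshΩ Ω h ∪ B) u) y :=
  statement6_general Ω hbd h hh B hBfin u x hx hne'

end
end
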